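/- Let 𝔏 denote the set of Liouville numbers, i.e. 𝔏 = ⋂_{τ>2} {x ∈ ℝ : |x − p/q| < q^{−τ} for infinitely many pairs (p,q) ∈ ℤ × ℕ}. Then dim_H(𝔏 × 𝔏) ≥ 1, where 𝔏 × 𝔏 is viewed as a subset of ℝ². -/

import Mathlib

open MeasureTheory
open scoped ENNReal

/-- The set of Liouville numbers, defined as
`⋂_{τ>2} {x ∈ ℝ : |x − p/q| < q^{−τ} for infinitely many (p,q) ∈ ℤ × ℕ}`. -/
noncomputable def LiouvilleSet : Set ℝ :=
  ⋂ τ ∈ Set.Ioi (2:ℝ),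
    {x : ℝ | {pq : ℤ × ℕ | 0 < pq.2 ∧
      |x - (pq.1 : ℝ) / (pq.2 : ℝ)| < (pq.2 : ℝ) ^ (-τ)}.Infinite}

/-!
Erdős: every real number is the sum of two Liouville numbers, because the Liouville numbers
form a residual subset of `ℝ` and so does its image under `u ↦ t - u`; by Baire the two meet.
Hence the addition map, which is Lipschitz on `ℝ × ℝ`, sends `𝔏 × 𝔏` onto `ℝ`, and Lipschitz
maps do not increase Hausdorff dimension.
-/

open Filter Set
open scoped Pointwise

theorem Liouville.mem_liouvilleSet {x : ℝ} (hx : Liouville x) : x ∈ LiouvilleSet := by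
  simp only [LiouvilleSet, mem_iInter₂, mem_Ioi, mem_ofPred_eq]
  intro τ _
  have hfreq : ∃ᶠ n : ℕ in atTop, 0 < n ∧ ∃ m : ℤ, |x - m / n| < (n : ℝ) ^ (-τ) :=
    ((hx.liouvilleWith (τ + 1)).frequently_lt_rpow_neg (lt_add_one τ)).and_eventually
      (eventually_gt_atTop 0) |>.mono fun n ⟨⟨m, _, hm⟩, hn⟩ => ⟨hn, m, hm⟩
  refine Set.Infinite.of_image Prod.snd <|
    (Nat.frequently_atTop_iff_infinite.mp hfreq).mono ?_
  rintro n ⟨hn, m, hm⟩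
  exact ⟨(m, n), ⟨hn, hm⟩, rfl⟩

theorem exists_liouville_add_eq (t : ℝ) : ∃ u v : ℝ, Liouville u ∧ Liouville v ∧ u + v = t := by
  have hsub : ∀ᶠ u in residual ℝ, Liouville (t - u) := by
    have h := eventually_residual_liouville
    rw [← (Homeomorph.subLeft t).residual_map_eq] at h
    exact eventually_map.mp h
  obtain ⟨u, hu, hv⟩ :=
    (dense_of_mem_residual (eventually_residual_liouville.and hsub)).nonempty
  exact ⟨u, t - u, hu, hv, add_sub_cancel u t⟩

theorem dimH_add_le_dimH_prod {E : Type*} [NormedAddCommGroup E] (s t : Set E) :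
    dimH (s + t) ≤ dimH (s ×ˢ t) := by
  rw [← image2_add, ← image_prod]
  exact (LipschitzWith.prod_fst.add LipschitzWith.prod_snd).dimH_image_le _

theorem stmt_12 : 1 ≤ dimH (LiouvilleSet ×ˢ LiouvilleSet) := by
  have hsum : LiouvilleSet + LiouvilleSet = univ := by
    refine eq_univ_of_forall fun t => ?_
    obtain ⟨u, v, hu, hv, rfl⟩ := exists_liouville_add_eq t
    exact add_mem_add hu.mem_liouvilleSet hv.mem_liouvilleSet
  calc (1 : ℝ≥0∞) = dimH (univ : Set ℝ) := Real.dimH_univ.symm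
    _ = dimH (LiouvilleSet + LiouvilleSet) := by rw [hsum]
    _ ≤ dimH (LiouvilleSet ×ˢ LiouvilleSet) := dimH_add_le_dimH_prod _ _
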